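/- arXiv:1205.6315 — 3 statements merged into one kernel-verified Lean document; each statement's English description precedes it below -/
import Mathlib

section
/- Let l : [0,T] → ℝ be Lebesgue integrable. Then for each ρ ∈ (0,T] there exists a measurable set I_ρ ⊆ [0,T] with Lebesgue measure |I_ρ| = ρ such that ∫_{I_ρ} l(s) ds = (ρ/T)·∫_0^T l(s) ds + o(ρ) as ρ → 0. (A standard concrete choice: one may realize the error term as o(ρ) uniformly from the Lebesgue differentiation/density argument.) -/
/-!
The error term is in fact zero: for every `ρ ∈ (0, T]` some set of measure `ρ` carries exactly the
proportional share of `∫ l`. Put `c = (1/T) ∫₀ᵀ l` and `H x = ∫₀ˣ l - c x`, so that `H 0 = H T = 0`.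
Read `[0, T]` as a circle and slide a window of length `ρ` around it: the integral of `l - c` over
the window starting at `a` is `H (min (a + ρ) T) + H (max (a + ρ - T) 0) - H a`. One of the first two
terms vanishes, so this is `H b - H a` for some `b ∈ [0, T]`; it is `≤ 0` at a maximum point of `H`
and `≥ 0` at a minimum point, and the intermediate value theorem gives a window on which it is `0`.
-/

open MeasureTheory Filter Set

section Window

variable {T ρ a : ℝ}

lemma min_add_max_sub_eq (x T : ℝ) : min x T + max (x - T) 0 = x := by
  rcases le_total x T with h | h
  · rw [min_eq_left h, max_eq_right (by linarith)]; ring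
  · rw [min_eq_right h, max_eq_left (by linarith)]; ring

lemma max_add_sub_le (ha : 0 ≤ a) (hρT : ρ ≤ T) : max (a + ρ - T) 0 ≤ a :=
  max_le (by linarith) ha

lemma le_min_add (haT : a ≤ T) (hρ : 0 ≤ ρ) : a ≤ min (a + ρ) T :=
  le_min (by linarith) haT

lemma min_add_mem_Icc (ha : a ∈ Icc 0 T) (hρ : 0 ≤ ρ) : min (a + ρ) T ∈ Icc 0 T :=
  ⟨ha.1.trans (le_min_add ha.2 hρ), min_le_right _ _⟩

lemma max_add_sub_mem_Icc (ha : a ∈ Icc 0 T) (hρT : ρ ≤ T) : max (a + ρ - T) 0 ∈ Icc 0 T :=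
  ⟨le_max_right _ _, (max_add_sub_le ha.1 hρT).trans ha.2⟩

lemma exists_mem_Icc_apply_min_add_apply_max_eq {H : ℝ → ℝ} (h0 : H 0 = 0) (hT : H T = 0)
    (ha : a ∈ Icc 0 T) (hρ : 0 ≤ ρ) (hρT : ρ ≤ T) :
    ∃ b ∈ Icc 0 T, H (min (a + ρ) T) + H (max (a + ρ - T) 0) = H b := by
  rcases le_total (a + ρ) T with h | h
  · exact ⟨a + ρ, ⟨by linarith [ha.1], h⟩, by
      rw [min_eq_left h, max_eq_right (by linarith), h0, add_zero]⟩
  · exact ⟨a + ρ - T, ⟨by linarith, by linarith [ha.2]⟩, by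
      rw [min_eq_right h, max_eq_left (by linarith), hT, zero_add]⟩

lemma ContinuousOn.exists_apply_min_add_apply_max_eq {H : ℝ → ℝ}
    (hH : ContinuousOn H (Icc 0 T)) (h0 : H 0 = 0) (hT : H T = 0) (hρ : 0 ≤ ρ) (hρT : ρ ≤ T) :
    ∃ a ∈ Icc 0 T, H (min (a + ρ) T) + H (max (a + ρ - T) 0) = H a := by
  set g : ℝ → ℝ := fun a ↦ H (min (a + ρ) T) + H (max (a + ρ - T) 0) - H a
  have hg : ContinuousOn g (Icc 0 T) :=
    ((hH.comp (by fun_prop) fun x hx ↦ min_add_mem_Icc hx hρ).add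
      (hH.comp (by fun_prop) fun x hx ↦ max_add_sub_mem_Icc hx hρT)).sub hH
  have hne : (Icc 0 T).Nonempty := nonempty_Icc.2 (hρ.trans hρT)
  obtain ⟨xM, hxM, hmax⟩ := isCompact_Icc.exists_isMaxOn hne hH
  obtain ⟨xm, hxm, hmin⟩ := isCompact_Icc.exists_isMinOn hne hH
  have hgM : g xM ≤ 0 := by
    obtain ⟨b, hb, hb_eq⟩ := exists_mem_Icc_apply_min_add_apply_max_eq h0 hT hxM hρ hρT
    simp only [g, hb_eq]
    exact sub_nonpos.2 (hmax hb)
  have hgm : 0 ≤ g xm := by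
    obtain ⟨b, hb, hb_eq⟩ := exists_mem_Icc_apply_min_add_apply_max_eq h0 hT hxm hρ hρT
    simp only [g, hb_eq]
    exact sub_nonneg.2 (hmin hb)
  have hsub : uIcc xM xm ⊆ Icc 0 T := ordConnected_Icc.uIcc_subset hxM hxm
  obtain ⟨a, ha, hga⟩ := intermediate_value_uIcc (hg.mono hsub) (mem_uIcc_of_le hgM hgm)
  exact ⟨a, hsub ha, sub_eq_zero.1 hga⟩

/-- The arc of length `ρ` starting at `a` on the circle obtained by gluing the ends of `[0, T]`. -/
def circularWindow (T ρ a : ℝ) : Set ℝ :=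
  Ioc a (min (a + ρ) T) ∪ Ioc 0 (max (a + ρ - T) 0)

lemma measurableSet_circularWindow : MeasurableSet (circularWindow T ρ a) :=
  measurableSet_Ioc.union measurableSet_Ioc

lemma circularWindow_pieces_disjoint (ha : 0 ≤ a) (hρT : ρ ≤ T) :
    Disjoint (Ioc a (min (a + ρ) T)) (Ioc 0 (max (a + ρ - T) 0)) :=
  disjoint_left.2 fun _ hx hx' ↦ hx.1.not_ge (hx'.2.trans (max_add_sub_le ha hρT))

lemma circularWindow_subset_Icc (ha : a ∈ Icc 0 T) (hρT : ρ ≤ T) :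
    circularWindow T ρ a ⊆ Icc 0 T := by
  rintro x (hx | hx)
  · exact ⟨ha.1.trans hx.1.le, hx.2.trans (min_le_right _ _)⟩
  · exact ⟨hx.1.le, hx.2.trans ((max_add_sub_le ha.1 hρT).trans ha.2)⟩

lemma volume_circularWindow (ha : a ∈ Icc 0 T) (hρ : 0 ≤ ρ) (hρT : ρ ≤ T) :
    volume (circularWindow T ρ a) = ENNReal.ofReal ρ := by
  rw [circularWindow, measure_union (circularWindow_pieces_disjoint ha.1 hρT) measurableSet_Ioc,
    Real.volume_Ioc, Real.volume_Ioc, sub_zero,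
    ← ENNReal.ofReal_add (sub_nonneg.2 (le_min_add ha.2 hρ)) (le_max_right _ _)]
  congr 1
  linarith [min_add_max_sub_eq (a + ρ) T]

lemma setIntegral_circularWindow {f : ℝ → ℝ} (hf : IntegrableOn f (Icc 0 T))
    (ha : a ∈ Icc 0 T) (hρ : 0 ≤ ρ) (hρT : ρ ≤ T) :
    ∫ x in circularWindow T ρ a, f x =
      (∫ x in a..min (a + ρ) T, f x) + ∫ x in (0 : ℝ)..max (a + ρ - T) 0, f x := by
  have hsub := circularWindow_subset_Icc ha hρT
  rw [circularWindow, setIntegral_union (circularWindow_pieces_disjoint ha.1 hρT) measurableSet_Ioc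
    (hf.mono_set (subset_union_left.trans hsub)) (hf.mono_set (subset_union_right.trans hsub)),
    intervalIntegral.integral_of_le (le_min_add ha.2 hρ),
    intervalIntegral.integral_of_le (le_max_right _ _)]

end Window

lemma exists_subset_Icc_volume_eq_setIntegral_eq {T ρ : ℝ} {l : ℝ → ℝ} (hT : 0 < T)
    (hl : IntegrableOn l (Icc 0 T)) (hρ : 0 ≤ ρ) (hρT : ρ ≤ T) :
    ∃ S ⊆ Icc 0 T, MeasurableSet S ∧ volume S = ENNReal.ofReal ρ ∧
      ∫ s in S, l s = ρ / T * ∫ s in Icc 0 T, l s := by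
  set c := (∫ s in Icc 0 T, l s) / T
  set F : ℝ → ℝ := fun x ↦ ∫ t in (0 : ℝ)..x, l t
  have hl' : IntegrableOn l (uIcc 0 T) := by rwa [uIcc_of_le hT.le]
  have hH : ContinuousOn (fun x ↦ F x - c * x) (Icc 0 T) := by
    rw [← uIcc_of_le hT.le]
    exact (intervalIntegral.continuousOn_primitive_interval hl').sub (by fun_prop)
  have hFT : F T = c * T := by
    rw [div_mul_cancel₀ _ hT.ne']
    simp only [F]
    rw [intervalIntegral.integral_of_le hT.le, integral_Icc_eq_integral_Ioc]
  obtain ⟨a, ha, hbal⟩ := hH.exists_apply_min_add_apply_max_eq (by simp [F]) (by simp [hFT]) hρ hρT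
  have hint : ∀ x ∈ Icc 0 T, IntervalIntegrable l volume 0 x := fun x hx ↦
    hl'.intervalIntegrable.mono_set (uIcc_subset_uIcc_left (by simp [uIcc_of_le hT.le, hx.1, hx.2]))
  refine ⟨circularWindow T ρ a, circularWindow_subset_Icc ha hρT, measurableSet_circularWindow,
    volume_circularWindow ha hρ hρT, ?_⟩
  rw [setIntegral_circularWindow hl ha hρ hρT, ← intervalIntegral.integral_interval_sub_left
    (hint _ (min_add_mem_Icc ha hρ)) (hint a ha), mul_comm_div]
  linear_combination hbal + c * min_add_max_sub_eq (a + ρ) T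

theorem stmt_3 (T : ℝ) (hT : 0 < T) (l : ℝ → ℝ)
    (hl : IntegrableOn l (Set.Icc 0 T)) :
    ∃ I : ℝ → Set ℝ,
      (∀ ρ ∈ Set.Ioc 0 T, MeasurableSet (I ρ) ∧ I ρ ⊆ Set.Icc 0 T ∧
        volume (I ρ) = ENNReal.ofReal ρ) ∧
      (fun ρ => (∫ s in I ρ, l s) - (ρ / T) * ∫ s in Set.Icc 0 T, l s)
        =o[nhdsWithin 0 (Set.Ioi 0)] (fun ρ => ρ) := by
  choose! I hIsub hImeas hIvol hIint using fun ρ (hρ : ρ ∈ Ioc 0 T) ↦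
    exists_subset_Icc_volume_eq_setIntegral_eq hT hl hρ.1.le hρ.2
  refine ⟨I, fun ρ hρ ↦ ⟨hImeas ρ hρ, hIsub ρ hρ, hIvol ρ hρ⟩, ?_⟩
  refine (Asymptotics.isLittleO_zero _ _).congr' ?_ EventuallyEq.rfl
  filter_upwards [Ioo_mem_nhdsGT hT] with ρ hρ
  rw [hIint ρ (Ioo_subset_Ioc_self hρ), sub_self]
end

section
/- The gradient of the distance function to a nonempty closed convex set K ⊆ ℝᵈ at any point x ∉ K equals (x − P_K(x))/‖x − P_K(x)‖, where P_K is the metric projection onto K; in particular the gradient has unit norm, and ⟨∇dist(·,K)(x), y − x⟩ ≤ 0 for all y ∈ K. -/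
/-!
Write `u = (x - P) / ‖x - P‖`. The upper bound `dist(y, K) ≤ ‖y - P‖` and, via the variational
inequality, the lower bound `⟪u, y - P⟫ ≤ dist(y, K)` squeeze the distance function between two
functions that agree with it at `x` and both have gradient `u` there.
-/

open Metric Filter Asymptotics Topology
open scoped RealInnerProductSpace

theorem HasFDerivAt.squeeze {E : Type*} [NormedAddCommGroup E] [NormedSpace ℝ E]
    {f g h : E → ℝ} {f' : E →L[ℝ] ℝ} {x : E}
    (hg : HasFDerivAt g f' x) (hh : HasFDerivAt h f' x)
    (hgf : g ≤ᶠ[𝓝 x] f) (hfh : f ≤ᶠ[𝓝 x] h) (hgx : g x = f x) (hhx : h x = f x) :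
    HasFDerivAt f f' x := by
  rw [hasFDerivAt_iff_isLittleO]
  refine IsBigO.trans_isLittleO ?_ (hg.isLittleO.norm_left.add hh.isLittleO.norm_left)
  refine IsBigO.of_bound' ?_
  filter_upwards [hgf, hfh] with y hgfy hfhy
  simp only [hgx, hhx, Real.norm_eq_abs]
  calc |f y - f x - f' (y - x)|
      ≤ max |g y - f x - f' (y - x)| |h y - f x - f' (y - x)| :=
        abs_le_max_abs_abs (by linarith) (by linarith)
    _ ≤ |g y - f x - f' (y - x)| + |h y - f x - f' (y - x)| :=
        max_le_add_of_nonneg (abs_nonneg _) (abs_nonneg _)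
    _ ≤ _ := le_abs_self _

theorem infDist_eq_dist_of_forall_dist_le {α : Type*} [PseudoMetricSpace α] {K : Set α} {x P : α}
    (hP : P ∈ K) (hmin : ∀ y ∈ K, dist x P ≤ dist x y) : infDist x K = dist x P :=
  le_antisymm (infDist_le_dist_of_mem hP) ((le_infDist ⟨P, hP⟩).2 hmin)

section

variable {F : Type*} [NormedAddCommGroup F] [InnerProductSpace ℝ F]

theorem inner_sub_nonpos_of_forall_dist_le {K : Set F} {x P : F} (hK : Convex ℝ K) (hP : P ∈ K)
    (hmin : ∀ y ∈ K, dist x P ≤ dist x y) : ∀ z ∈ K, ⟪x - P, z - P⟫ ≤ 0 := by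
  refine (norm_eq_iInf_iff_real_inner_le_zero hK hP).1 ?_
  simpa only [← dist_eq_norm, infDist_eq_iInf] using
    (infDist_eq_dist_of_forall_dist_le hP hmin).symm

theorem inner_sub_le_infDist {K : Set F} {v P : F} (hK : K.Nonempty) (hv : ‖v‖ ≤ 1)
    (hnormal : ∀ z ∈ K, ⟪v, z - P⟫ ≤ 0) (y : F) : ⟪v, y - P⟫ ≤ infDist y K := by
  refine (le_infDist hK).2 fun z hz => ?_
  calc ⟪v, y - P⟫ = ⟪v, y - z⟫ + ⟪v, z - P⟫ := by rw [← inner_add_right, sub_add_sub_cancel]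
    _ ≤ ‖y - z‖ + 0 := add_le_add ((real_inner_le_norm _ _).trans
        (mul_le_of_le_one_left (norm_nonneg _) hv)) (hnormal z hz)
    _ = dist y z := by rw [add_zero, dist_eq_norm]

theorem hasFDerivAt_norm_sub {x P : F} (hxP : x ≠ P) :
    HasFDerivAt (fun y => ‖y - P‖) (innerSL ℝ (‖x - P‖⁻¹ • (x - P))) x := by
  have hsq := ((hasFDerivAt_id x).sub_const P).norm_sq.sqrt (by simpa [sub_eq_zero] using hxP)
  simp only [Real.sqrt_sq (norm_nonneg _)] at hsq
  refine hsq.congr_fderiv (ContinuousLinearMap.ext fun v => ?_)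
  simp only [id, smul_apply, nsmul_eq_mul, Nat.cast_ofNat, ContinuousLinearMap.comp_apply,
    ContinuousLinearMap.id_apply, innerSL_apply_apply, real_inner_smul_left, smul_eq_mul]
  field_simp

theorem hasFDerivAt_inner_sub (u P x : F) :
    HasFDerivAt (fun y => ⟪u, y - P⟫) (innerSL ℝ u) x := by
  have := (innerSL ℝ u).hasFDerivAt.sub_const ⟪u, P⟫ (x := x)
  simp only [innerSL_apply_apply, ← inner_sub_right] at this
  exact this

theorem inner_inv_norm_smul_self (v : F) : ⟪‖v‖⁻¹ • v, v⟫ = ‖v‖ := by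
  rw [real_inner_smul_left, real_inner_self_eq_norm_sq]
  rcases eq_or_ne ‖v‖ 0 with h | h
  · simp [h]
  · field_simp

theorem hasGradientAt_infDist_of_forall_dist_le [CompleteSpace F] {K : Set F} {x P : F}
    (hK : Convex ℝ K) (hP : P ∈ K) (hxP : x ≠ P) (hmin : ∀ y ∈ K, dist x P ≤ dist x y) :
    HasGradientAt (infDist · K) (‖x - P‖⁻¹ • (x - P)) x := by
  set u := ‖x - P‖⁻¹ • (x - P)
  have hu : ‖u‖ = 1 := norm_smul_inv_norm (sub_ne_zero.2 hxP)
  have hnormal : ∀ z ∈ K, ⟪u, z - P⟫ ≤ 0 := fun z hz => by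
    simpa only [u, real_inner_smul_left] using
      mul_nonpos_of_nonneg_of_nonpos (inv_nonneg.2 (norm_nonneg _))
        (inner_sub_nonpos_of_forall_dist_le hK hP hmin z hz)
  have hx : infDist x K = ‖x - P‖ := by rw [infDist_eq_dist_of_forall_dist_le hP hmin, dist_eq_norm]
  rw [hasGradientAt_iff_hasFDerivAt]
  refine (hasFDerivAt_inner_sub u P x).squeeze (hasFDerivAt_norm_sub hxP)
    (Eventually.of_forall (inner_sub_le_infDist ⟨P, hP⟩ hu.le hnormal))
    (Eventually.of_forall fun y => ?_) ?_ ?_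
  · simpa only [dist_eq_norm] using infDist_le_dist_of_mem hP
  · rw [hx]; exact inner_inv_norm_smul_self _
  · exact hx.symm

end

theorem stmt_5_general (d : ℕ) (K : Set (EuclideanSpace ℝ (Fin d)))
    (hKconv : Convex ℝ K)
    (x : EuclideanSpace ℝ (Fin d)) (hx : x ∉ K)
    (P : EuclideanSpace ℝ (Fin d)) (hP : P ∈ K)
    (hproj : ∀ y ∈ K, dist x P ≤ dist x y) :
    gradient (fun y => Metric.infDist y K) x = ‖x - P‖⁻¹ • (x - P) ∧
    ‖gradient (fun y => Metric.infDist y K) x‖ = 1 ∧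
    ∀ y ∈ K, (inner ℝ (gradient (fun y => Metric.infDist y K) x) (y - x) : ℝ) ≤ 0 := by
  have hxP : x ≠ P := fun h => hx (h ▸ hP)
  have hgrad := (hasGradientAt_infDist_of_forall_dist_le hKconv hP hxP hproj).gradient
  refine ⟨hgrad, hgrad ▸ norm_smul_inv_norm (sub_ne_zero.2 hxP), fun y hy => ?_⟩
  rw [hgrad, real_inner_smul_left]
  refine mul_nonpos_of_nonneg_of_nonpos (inv_nonneg.2 (norm_nonneg _)) ?_
  rw [← sub_sub_sub_cancel_right y x P, inner_sub_right]
  linarith [inner_sub_nonpos_of_forall_dist_le hKconv hP hproj y hy,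
    real_inner_self_nonneg (x := x - P)]

theorem stmt_5 (d : ℕ) (K : Set (EuclideanSpace ℝ (Fin d)))
    (hKne : K.Nonempty) (hKcl : IsClosed K) (hKconv : Convex ℝ K)
    (x : EuclideanSpace ℝ (Fin d)) (hx : x ∉ K)
    (P : EuclideanSpace ℝ (Fin d)) (hP : P ∈ K)
    (hproj : ∀ y ∈ K, dist x P ≤ dist x y) :
    gradient (fun y => Metric.infDist y K) x = ‖x - P‖⁻¹ • (x - P) ∧
    ‖gradient (fun y => Metric.infDist y K) x‖ = 1 ∧
    ∀ y ∈ K, (inner ℝ (gradient (fun y => Metric.infDist y K) x) (y - x) : ℝ) ≤ 0 :=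
  stmt_5_general d K hKconv x hx P hP hproj
end

section
/- Ekeland's variational principle: Let (X, d) be a complete metric space and F : X → ℝ a lower semicontinuous function bounded from below. Suppose x₀ ∈ X satisfies F(x₀) ≤ inf F + ε for some ε > 0. Then for every λ > 0 there exists x̄ ∈ X with (i) F(x̄) ≤ F(x₀); (ii) d(x̄, x₀) ≤ λ; (iii) F(x) + (ε/λ)·d(x, x̄) ≥ F(x̄) for all x ∈ X. -/
/-!
Starting from `x₀`, pick `uₙ₊₁` among the points `y` with `F y + α d(y, uₙ) ≤ F uₙ` so that
`F uₙ₊₁` is within `2⁻ⁿ` of the infimum of `F` over that set. These sets are closed (by lower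
semicontinuity), nested (by the triangle inequality), and the near-minimality forces their
diameters to shrink to `0`, so by completeness they meet in a single point `x̄`. Any `x` with
`F x + α d(x, x̄) ≤ F x̄` lies in all of them, hence equals `x̄`. With `α = ε / λ`, the bound
`F x̄ + α d(x̄, x₀) ≤ F x₀ ≤ inf F + ε` gives `d(x̄, x₀) ≤ λ`.
-/

open Filter Metric Set Topology

theorem exists_mem_forall_le_add {ι : Type*} {F : ι → ℝ} {s : Set ι} (hs : s.Nonempty)
    (hF : BddBelow (F '' s)) {δ : ℝ} (hδ : 0 < δ) : ∃ y ∈ s, ∀ z ∈ s, F y ≤ F z + δ := by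
  obtain ⟨_, ⟨y, hy, rfl⟩, hlt⟩ :=
    exists_lt_of_csInf_lt (hs.image F) (lt_add_of_pos_right (sInf (F '' s)) hδ)
  exact ⟨y, hy, fun z hz => hlt.le.trans (by gcongr; exact csInf_le hF (mem_image_of_mem F hz))⟩

namespace Ekeland

variable {X : Type*} [PseudoMetricSpace X] {F : X → ℝ} {α δ : ℝ} {x y : X}

def improvements (F : X → ℝ) (α : ℝ) (x : X) : Set X :=
  {y | F y + α * dist y x ≤ F x}

theorem mem_improvements_self : x ∈ improvements F α x := by
  simp [improvements]

theorem improvements_subset (hα : 0 ≤ α) (hy : y ∈ improvements F α x) :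
    improvements F α y ⊆ improvements F α x := fun z (hz : F z + α * dist z y ≤ F y) => by
  have : α * dist z x ≤ α * dist z y + α * dist y x := by
    rw [← mul_add]; gcongr; exact dist_triangle z y x
  change F z + α * dist z x ≤ F x
  linarith [show F y + α * dist y x ≤ F x from hy]

theorem isClosed_improvements (hF : LowerSemicontinuous F) :
    IsClosed (improvements F α x) :=
  (hF.add (continuous_const.mul (continuous_id.dist continuous_const)).lowerSemicontinuous)
    |>.isClosed_preimage (F x)

theorem improvements_subset_closedBall (hα : 0 < α) (hy : y ∈ improvements F α x)
    (hmin : ∀ z ∈ improvements F α x, F y ≤ F z + δ) :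
    improvements F α y ⊆ closedBall y (δ / α) := fun z (hz : F z + α * dist z y ≤ F y) => by
  have := hmin z (improvements_subset hα.le hy hz)
  rw [mem_closedBall, le_div_iff₀ hα]
  linarith

theorem exists_minimizing_seq (hbdd : BddBelow (range F)) (x₀ : X) :
    ∃ u : ℕ → X, u 0 = x₀ ∧ (∀ n, u (n + 1) ∈ improvements F α (u n)) ∧
      ∀ n, ∀ z ∈ improvements F α (u n), F (u (n + 1)) ≤ F z + (1 / 2) ^ n := by
  have step (x : X) (n : ℕ) : ∃ y ∈ improvements F α x,
      ∀ z ∈ improvements F α x, F y ≤ F z + (1 / 2) ^ n :=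
    exists_mem_forall_le_add ⟨x, mem_improvements_self⟩
      (hbdd.mono (image_subset_range F _)) (by positivity)
  choose next hnext_mem hnext_min using step
  exact ⟨fun n => Nat.rec x₀ (fun k x => next x k) n, rfl,
    fun n => hnext_mem _ n, fun n => hnext_min _ n⟩

end Ekeland

open Ekeland in
theorem ekeland_variational_principle {X : Type*} [MetricSpace X] [CompleteSpace X]
    {F : X → ℝ} (hF : LowerSemicontinuous F) (hbdd : BddBelow (range F))
    {α : ℝ} (hα : 0 < α) (x₀ : X) :
    ∃ xbar, F xbar + α * dist xbar x₀ ≤ F x₀ ∧ ∀ x ≠ xbar, F xbar < F x + α * dist x xbar := by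
  obtain ⟨u, hu₀, hu_mem, hu_min⟩ := exists_minimizing_seq hbdd x₀
  set s : ℕ → Set X := fun n => improvements F α (u (n + 1))
  have hanti : Antitone fun n => improvements F α (u n) :=
    antitone_nat_of_succ_le fun n => improvements_subset hα.le (hu_mem n)
  have hball (n : ℕ) : s n ⊆ closedBall (u (n + 1)) ((1 / 2) ^ n / α) :=
    improvements_subset_closedBall hα (hu_mem n) (hu_min n)
  have hdiam (n : ℕ) : diam (s n) ≤ 2 * ((1 / 2) ^ n / α) :=
    (diam_mono (hball n) isBounded_closedBall).trans (diam_closedBall (by positivity))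
  have hdiam_lim : Tendsto (fun n => diam (s n)) atTop (𝓝 0) := by
    have : Tendsto (fun n : ℕ => 2 * ((1 / 2 : ℝ) ^ n / α)) atTop (𝓝 (2 * (0 / α))) :=
      ((tendsto_pow_atTop_nhds_zero_of_lt_one (by norm_num) (by norm_num)).div_const α).const_mul 2
    rw [zero_div, mul_zero] at this
    exact squeeze_zero (fun n => diam_nonneg) hdiam this
  obtain ⟨xbar, hxbar⟩ := nonempty_iInter_of_nonempty_biInter
    (fun n => isClosed_improvements hF) (fun n => isBounded_closedBall.subset (hball n))
    (fun N => ⟨u (N + 1), mem_iInter₂.2 fun n hn => hanti (by omega) mem_improvements_self⟩)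
    hdiam_lim
  rw [mem_iInter] at hxbar
  refine ⟨xbar, hu₀ ▸ hanti (Nat.zero_le 1) (hxbar 0), fun x hx => lt_of_not_ge fun hle => hx ?_⟩
  have hxs (n : ℕ) : x ∈ s n := improvements_subset hα.le (hxbar n) hle
  refine dist_le_zero.1 (ge_of_tendsto' hdiam_lim fun n => ?_)
  exact dist_le_diam_of_mem (isBounded_closedBall.subset (hball n)) (hxs n) (hxbar n)

theorem stmt_12 {X : Type*} [MetricSpace X] [CompleteSpace X]
    (F : X → ℝ) (hlsc : LowerSemicontinuous F) (hbdd : BddBelow (Set.range F))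
    (ε : ℝ) (hε : 0 < ε) (x₀ : X) (hx₀ : F x₀ ≤ (⨅ x, F x) + ε)
    (lam : ℝ) (hlam : 0 < lam) :
    ∃ xbar : X, F xbar ≤ F x₀ ∧ dist xbar x₀ ≤ lam ∧
      ∀ x : X, F xbar ≤ F x + (ε / lam) * dist x xbar := by
  obtain ⟨xbar, hdrop, hstrict⟩ := ekeland_variational_principle hlsc hbdd (div_pos hε hlam) x₀
  have hinf : (⨅ x, F x) ≤ F xbar := ciInf_le hbdd xbar
  have hdist_nonneg : 0 ≤ ε / lam * dist xbar x₀ := by positivity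
  refine ⟨xbar, by linarith, ?_, fun x => ?_⟩
  · have : ε / lam * dist xbar x₀ ≤ ε := by linarith
    rwa [div_mul_eq_mul_div, div_le_iff₀ hlam, mul_le_mul_iff_right₀ hε] at this
  · rcases eq_or_ne x xbar with rfl | hx
    · simp
    · exact (hstrict x hx).le
end
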